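/- arXiv:1503.03227 — 5 statements merged into one kernel-verified Lean document; each statement's English description precedes it below -/
import Mathlib

section
/- With g = h ⊕ m a reductive decomposition, the induced products on m satisfy: the cyclic sum over (X,Y,Z) of [X·Y, Z, T] equals 0 for all X,Y,Z,T ∈ m. -/
/-! Since `⁅h, m⁆ ⊆ m`, the `h`-part of `X` contributes nothing to the `h`-part of `⁅X, Z⁆` for
`Z ∈ m`; so `X·Y` may be replaced by `⁅X, Y⁆` inside `[X·Y, Z, T]`, and the cyclic sum becomes the
bracket of `T` with the `h`-part of the Jacobi sum. -/

theorem lie_lie_add_lie_lie_add_lie_lie {L : Type*} [LieRing L] (x y z : L) :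
    ⁅⁅x, y⁆, z⁆ + ⁅⁅y, z⁆, x⁆ + ⁅⁅z, x⁆, y⁆ = 0 := by
  rw [← lie_skew ⁅x, y⁆, ← lie_skew ⁅y, z⁆, ← lie_skew ⁅z, x⁆, ← neg_add, ← neg_add, neg_eq_zero]
  exact (add_rotate _ _ _).trans (lie_jacobi x y z)

namespace Submodule

variable {R L : Type*} [CommRing R] [LieRing L] [LieAlgebra R L]

theorem projection_lie_projection_of_mem_right {p q : Submodule R L} (hpq : IsCompl p q)
    (hlie : ∀ a ∈ p, ∀ b ∈ q, ⁅a, b⁆ ∈ q) (x : L) {y : L} (hy : y ∈ q) :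
    p.projection q hpq ⁅q.projection p hpq.symm x, y⁆ = p.projection q hpq ⁅x, y⁆ := by
  rw [projection_eq_self_sub_projection hpq x, sub_lie, map_sub,
    projection_apply_of_mem_right hpq (hlie _ (projection_apply_mem hpq x) _ hy), sub_zero]

end Submodule

theorem lie_yamaguti_LY4_general
    (k g : Type*) [Field k] [LieRing g] [LieAlgebra k g]
    (h : LieSubalgebra k g) (m : Submodule k g)
    (hc : IsCompl h.toSubmodule m)
    (hm : ∀ X ∈ h, ∀ Y ∈ m, ⁅X, Y⁆ ∈ m)
    (Pm : g →ₗ[k] g) (Ph : g →ₗ[k] g)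
    (hPm : Pm = m.subtype ∘ₗ Submodule.linearProjOfIsCompl m h.toSubmodule hc.symm)
    (hPh : Ph = h.toSubmodule.subtype ∘ₗ Submodule.linearProjOfIsCompl h.toSubmodule m hc)
    (X Y Z T : g) (hX : X ∈ m) (hY : Y ∈ m) (hZ : Z ∈ m) :
    ⁅Ph ⁅Pm ⁅X, Y⁆, Z⁆, T⁆ + ⁅Ph ⁅Pm ⁅Y, Z⁆, X⁆, T⁆ + ⁅Ph ⁅Pm ⁅Z, X⁆, Y⁆, T⁆ = 0 := by
  have drop_Pm : ∀ A {C}, C ∈ m → Ph ⁅Pm A, C⁆ = Ph ⁅A, C⁆ := by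
    subst hPm hPh
    exact Submodule.projection_lie_projection_of_mem_right hc hm
  calc _ = ⁅Ph (⁅⁅X, Y⁆, Z⁆ + ⁅⁅Y, Z⁆, X⁆ + ⁅⁅Z, X⁆, Y⁆), T⁆ := by
        rw [drop_Pm _ hZ, drop_Pm _ hX, drop_Pm _ hY, map_add, map_add, add_lie, add_lie]
    _ = 0 := by rw [lie_lie_add_lie_lie_add_lie_lie, map_zero, zero_lie]

theorem lie_yamaguti_LY4
    (k g : Type*) [Field k] [LieRing g] [LieAlgebra k g]
    (h : LieSubalgebra k g) (m : Submodule k g)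
    (hc : IsCompl h.toSubmodule m)
    (hm : ∀ X ∈ h, ∀ Y ∈ m, ⁅X, Y⁆ ∈ m)
    (Pm : g →ₗ[k] g) (Ph : g →ₗ[k] g)
    (hPm : Pm = m.subtype ∘ₗ Submodule.linearProjOfIsCompl m h.toSubmodule hc.symm)
    (hPh : Ph = h.toSubmodule.subtype ∘ₗ Submodule.linearProjOfIsCompl h.toSubmodule m hc)
    (X Y Z T : g) (hX : X ∈ m) (hY : Y ∈ m) (hZ : Z ∈ m) (hT : T ∈ m) :
    ⁅Ph ⁅Pm ⁅X, Y⁆, Z⁆, T⁆ + ⁅Ph ⁅Pm ⁅Y, Z⁆, X⁆, T⁆ + ⁅Ph ⁅Pm ⁅Z, X⁆, Y⁆, T⁆ = 0 :=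
  lie_yamaguti_LY4_general k g h m hc hm Pm Ph hPm hPh X Y Z T hX hY hZ
end

section
/- With g = h ⊕ m a reductive decomposition, the induced products on m satisfy the derivation property [X,Y,U·V] = [X,Y,U]·V + U·[X,Y,V] for all X,Y,U,V ∈ m. -/
/-!
Since `h` is a subalgebra and `[h, m] ⊆ m`, for `A ∈ h` the map `ad A` preserves both summands of
`g = h ⊕ m`, hence commutes with the projection `Pm`. Taking `A = Ph ⁅X, Y⁆`, the identity is
`Pm` applied to the Leibniz rule `⁅A, ⁅U, V⁆⁆ = ⁅⁅A, U⁆, V⁆ + ⁅U, ⁅A, V⁆⁆`.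
-/

namespace Submodule

variable {R E : Type*} [Ring R] [AddCommGroup E] [Module R E] {p q : Submodule R E}

theorem commute_projection_of_mem_invtSubmodule (hpq : IsCompl p q) {T : Module.End R E}
    (hp : p ∈ Module.End.invtSubmodule T) (hq : q ∈ Module.End.invtSubmodule T) :
    Commute (p.projection q hpq) T :=
  (LinearMap.IsIdempotentElem.commute_iff (isIdempotentElem_projection hpq)).2
    ⟨by simpa using hp, by simpa using hq⟩

end Submodule

namespace LieSubalgebra

variable {R L : Type*} [CommRing R] [LieRing L] [LieAlgebra R L] {h : LieSubalgebra R L}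
  {m : Submodule R L}

theorem lie_projection_of_mem (hc : IsCompl m h.toSubmodule)
    (hm : ∀ x ∈ h, ∀ y ∈ m, ⁅x, y⁆ ∈ m) {x : L} (hx : x ∈ h) (y : L) :
    ⁅x, m.projection h.toSubmodule hc y⁆ = m.projection h.toSubmodule hc ⁅x, y⁆ := by
  have hm_inv : m ∈ Module.End.invtSubmodule (LieAlgebra.ad R L x) :=
    (Module.End.mem_invtSubmodule _).2 fun y hy ↦ hm x hx y hy
  have hh_inv : h.toSubmodule ∈ Module.End.invtSubmodule (LieAlgebra.ad R L x) :=
    (Module.End.mem_invtSubmodule _).2 fun y hy ↦ h.lie_mem hx hy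
  simpa using (LinearMap.congr_fun
    (Submodule.commute_projection_of_mem_invtSubmodule hc hm_inv hh_inv).eq y).symm

end LieSubalgebra

theorem lie_yamaguti_LY5_general
    (k g : Type*) [Field k] [LieRing g] [LieAlgebra k g]
    (h : LieSubalgebra k g) (m : Submodule k g)
    (hc : IsCompl h.toSubmodule m)
    (hm : ∀ X ∈ h, ∀ Y ∈ m, ⁅X, Y⁆ ∈ m)
    (Pm : g →ₗ[k] g) (Ph : g →ₗ[k] g)
    (hPm : Pm = m.subtype ∘ₗ Submodule.linearProjOfIsCompl m h.toSubmodule hc.symm)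
    (hPh : Ph = h.toSubmodule.subtype ∘ₗ Submodule.linearProjOfIsCompl h.toSubmodule m hc)
    (X Y U V : g) :
    ⁅Ph ⁅X, Y⁆, Pm ⁅U, V⁆⁆
      = Pm ⁅⁅Ph ⁅X, Y⁆, U⁆, V⁆ + Pm ⁅U, ⁅Ph ⁅X, Y⁆, V⁆⁆ := by
  have hA : Ph ⁅X, Y⁆ ∈ h := hPh ▸ Submodule.projection_apply_mem hc _
  have hPm_eq : Pm = m.projection h.toSubmodule hc.symm := hPm
  rw [hPm_eq, LieSubalgebra.lie_projection_of_mem hc.symm hm hA, leibniz_lie, map_add]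

theorem lie_yamaguti_LY5
    (k g : Type*) [Field k] [LieRing g] [LieAlgebra k g]
    (h : LieSubalgebra k g) (m : Submodule k g)
    (hc : IsCompl h.toSubmodule m)
    (hm : ∀ X ∈ h, ∀ Y ∈ m, ⁅X, Y⁆ ∈ m)
    (Pm : g →ₗ[k] g) (Ph : g →ₗ[k] g)
    (hPm : Pm = m.subtype ∘ₗ Submodule.linearProjOfIsCompl m h.toSubmodule hc.symm)
    (hPh : Ph = h.toSubmodule.subtype ∘ₗ Submodule.linearProjOfIsCompl h.toSubmodule m hc)
    (X Y U V : g) (hX : X ∈ m) (hY : Y ∈ m) (hU : U ∈ m) (hV : V ∈ m) :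
    ⁅Ph ⁅X, Y⁆, Pm ⁅U, V⁆⁆
      = Pm ⁅⁅Ph ⁅X, Y⁆, U⁆, V⁆ + Pm ⁅U, ⁅Ph ⁅X, Y⁆, V⁆⁆ :=
  lie_yamaguti_LY5_general k g h m hc hm Pm Ph hPm hPh X Y U V
end

section
/- With g = h ⊕ m a reductive decomposition, the induced products on m satisfy [X,Y,[U,V,W]] = [[X,Y,U],V,W] + [U,[X,Y,V],W] + [U,V,[X,Y,W]] for all X,Y,U,V,W ∈ m. -/
/-!
Write `P` for the projection of `g` onto `h` along `m`. Since `h` is a subalgebra and `⁅h, m⁆ ⊆ m`,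
both summands of `g = h ⊕ m` are invariant under `ad a` for `a ∈ h`, so `P` commutes with `ad a`.
The identity is then the Leibniz rule for `ad (P ⁅X, Y⁆)`, applied once to `⁅P ⁅U, V⁆, W⁆` and,
through `P`, once to `⁅U, V⁆`.
-/

namespace LieSubalgebra

variable {R L : Type*} [CommRing R] [LieRing L] [LieAlgebra R L]
  {h : LieSubalgebra R L} {m : Submodule R L}

theorem commute_projection_ad (hc : IsCompl h.toSubmodule m)
    (hm : ∀ X ∈ h, ∀ Y ∈ m, ⁅X, Y⁆ ∈ m) {a : L} (ha : a ∈ h) :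
    Commute (h.toSubmodule.projection m hc) (LieAlgebra.ad R L a) := by
  rw [LinearMap.IsIdempotentElem.commute_iff (Submodule.isIdempotentElem_projection hc), Submodule.range_projection,
    Submodule.ker_projection, Module.End.mem_invtSubmodule, Module.End.mem_invtSubmodule]
  exact ⟨fun x hx => h.lie_mem ha hx, fun x hx => hm a ha x hx⟩

theorem projection_lie_of_mem (hc : IsCompl h.toSubmodule m)
    (hm : ∀ X ∈ h, ∀ Y ∈ m, ⁅X, Y⁆ ∈ m) {a : L} (ha : a ∈ h) (x : L) :
    h.toSubmodule.projection m hc ⁅a, x⁆ = ⁅a, h.toSubmodule.projection m hc x⁆ :=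
  LinearMap.congr_fun (commute_projection_ad hc hm ha).eq x

theorem lie_projection_lie_of_mem (hc : IsCompl h.toSubmodule m)
    (hm : ∀ X ∈ h, ∀ Y ∈ m, ⁅X, Y⁆ ∈ m) {a : L} (ha : a ∈ h) (u v : L) :
    ⁅a, h.toSubmodule.projection m hc ⁅u, v⁆⁆ =
      h.toSubmodule.projection m hc ⁅⁅a, u⁆, v⁆ + h.toSubmodule.projection m hc ⁅u, ⁅a, v⁆⁆ := by
  rw [← projection_lie_of_mem hc hm ha, leibniz_lie, map_add]

end LieSubalgebra

theorem lie_yamaguti_LY6_general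
    (k g : Type*) [Field k] [LieRing g] [LieAlgebra k g]
    (h : LieSubalgebra k g) (m : Submodule k g)
    (hc : IsCompl h.toSubmodule m)
    (hm : ∀ X ∈ h, ∀ Y ∈ m, ⁅X, Y⁆ ∈ m)
    (Ph : g →ₗ[k] g)
    (hPh : Ph = h.toSubmodule.subtype ∘ₗ Submodule.linearProjOfIsCompl h.toSubmodule m hc)
    (X Y U V W : g) :
    ⁅Ph ⁅X, Y⁆, ⁅Ph ⁅U, V⁆, W⁆⁆
      = ⁅Ph ⁅⁅Ph ⁅X, Y⁆, U⁆, V⁆, W⁆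
        + ⁅Ph ⁅U, ⁅Ph ⁅X, Y⁆, V⁆⁆, W⁆
        + ⁅Ph ⁅U, V⁆, ⁅Ph ⁅X, Y⁆, W⁆⁆ := by
  obtain rfl : Ph = h.toSubmodule.projection m hc := hPh
  have hA : h.toSubmodule.projection m hc ⁅X, Y⁆ ∈ h := Submodule.projection_apply_mem hc _
  rw [leibniz_lie, LieSubalgebra.lie_projection_lie_of_mem hc hm hA, add_lie]

theorem lie_yamaguti_LY6
    (k g : Type*) [Field k] [LieRing g] [LieAlgebra k g]
    (h : LieSubalgebra k g) (m : Submodule k g)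
    (hc : IsCompl h.toSubmodule m)
    (hm : ∀ X ∈ h, ∀ Y ∈ m, ⁅X, Y⁆ ∈ m)
    (Pm : g →ₗ[k] g) (Ph : g →ₗ[k] g)
    (hPm : Pm = m.subtype ∘ₗ Submodule.linearProjOfIsCompl m h.toSubmodule hc.symm)
    (hPh : Ph = h.toSubmodule.subtype ∘ₗ Submodule.linearProjOfIsCompl h.toSubmodule m hc)
    (X Y U V W : g) (hX : X ∈ m) (hY : Y ∈ m) (hU : U ∈ m) (hV : V ∈ m) (hW : W ∈ m) :
    ⁅Ph ⁅X, Y⁆, ⁅Ph ⁅U, V⁆, W⁆⁆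
      = ⁅Ph ⁅⁅Ph ⁅X, Y⁆, U⁆, V⁆, W⁆
        + ⁅Ph ⁅U, ⁅Ph ⁅X, Y⁆, V⁆⁆, W⁆
        + ⁅Ph ⁅U, V⁆, ⁅Ph ⁅X, Y⁆, W⁆⁆ :=
  lie_yamaguti_LY6_general k g h m hc hm Ph hPh X Y U V W
end

section
/- On the Lie algebra su(n) of traceless skew-Hermitian complex n×n matrices, the multiplication α(X,Y) = μXY - μ̄YX - ((μ-μ̄)/n)·trace(XY)·I, where μ ∈ ℂ with μ + μ̄ = 1, takes values in su(n) and defines a flexible Lie-admissible algebra whose associated commutator algebra is su(n) with its usual bracket. -/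
open Matrix

/-- On `su(n)`, the multiplication
`α(X,Y) = μ XY - μ̄ YX - ((μ-μ̄)/n) trace(XY) I`, with `μ + μ̄ = 1`, takes values in
`su(n)` and defines a flexible Lie-admissible algebra whose associated commutator algebra
is `su(n)` with its usual bracket. -/
theorem su_n_flexible_lieAdmissible
    (n : ℕ) (hn : 0 < n) (μ : ℂ) (hμ : μ + (starRingEnd ℂ) μ = 1)
    (α : Matrix (Fin n) (Fin n) ℂ → Matrix (Fin n) (Fin n) ℂ → Matrix (Fin n) (Fin n) ℂ)
    (hα : ∀ X Y, α X Y =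
      μ • (X * Y) - (starRingEnd ℂ) μ • (Y * X)
        - (((μ - (starRingEnd ℂ) μ) / n) * (X * Y).trace) • (1 : Matrix (Fin n) (Fin n) ℂ)) :
    -- α takes values in su(n)
    (∀ X Y : Matrix (Fin n) (Fin n) ℂ,
      Xᴴ = -X → X.trace = 0 → Yᴴ = -Y → Y.trace = 0 →
        (α X Y)ᴴ = -(α X Y) ∧ (α X Y).trace = 0) ∧
    -- the commutator algebra of α is su(n) with its usual bracket (so α is Lie-admissible)
    (∀ X Y : Matrix (Fin n) (Fin n) ℂ,
      Xᴴ = -X → X.trace = 0 → Yᴴ = -Y → Y.trace = 0 →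
        α X Y - α Y X = X * Y - Y * X) ∧
    -- α is flexible
    (∀ X Y : Matrix (Fin n) (Fin n) ℂ,
      Xᴴ = -X → X.trace = 0 → Yᴴ = -Y → Y.trace = 0 →
        α (α X Y) X - α X (α Y X) = 0) := by
  have hn' : (n : ℂ) ≠ 0 := Nat.cast_ne_zero.mpr hn.ne'
  have hc : (starRingEnd ℂ) μ = 1 - μ := by linear_combination hμ
  refine ⟨?_, ?_, ?_⟩
  · intro X Y hX htX hY htY
    have htr : (starRingEnd ℂ) (X * Y).trace = (X * Y).trace := by
      show star (X * Y).trace = _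
      rw [← Matrix.trace_conjTranspose, Matrix.conjTranspose_mul, hX, hY,
        Matrix.neg_mul, Matrix.mul_neg, neg_neg, Matrix.trace_mul_comm]
    have h1 : (starRingEnd ℂ) ((μ - (starRingEnd ℂ) μ) / n * (X * Y).trace)
        = -((μ - (starRingEnd ℂ) μ) / n * (X * Y).trace) := by
      rw [_root_.map_mul, map_div₀, map_sub, Complex.conj_conj, map_natCast, htr]; ring
    constructor
    · rw [hα]
      simp only [Matrix.conjTranspose_sub, Matrix.conjTranspose_smul, Matrix.conjTranspose_mul,
        Matrix.conjTranspose_one, hX, hY, Matrix.neg_mul, Matrix.mul_neg, neg_neg,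
        RCLike.star_def, Complex.conj_conj, h1]
      module
    · rw [hα]
      simp only [Matrix.trace_sub, Matrix.trace_smul, Matrix.trace_one, smul_eq_mul,
        Fintype.card_fin, Matrix.trace_mul_comm Y X, hc]
      field_simp
      ring
  · intro X Y hX htX hY htY
    rw [hα, hα, Matrix.trace_mul_comm Y X, hc]
    module
  · intro X Y hX htX hY htY
    rw [hα X Y, hα Y X, hα, hα]
    simp only [Matrix.sub_mul, Matrix.mul_sub, smul_mul_assoc, mul_smul_comm, mul_one, one_mul,
      Matrix.trace_sub, Matrix.trace_smul, smul_smul, smul_eq_mul, mul_assoc, Matrix.trace_one,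
      Fintype.card_fin, htX, mul_zero, sub_zero]
    rw [Matrix.trace_mul_comm Y (X * X), ← mul_assoc X X Y, Matrix.trace_mul_comm Y X, hc]
    match_scalars <;> field_simp <;> ring
end

section
/- Let L be a Lie algebra acting on itself by the adjoint action, and let α: L × L → L be a bilinear map such that every ad_X (X ∈ L) is a derivation of (L, α), and such that (L,α) is Lie-admissible with α(X,Y) - α(Y,X) = [X,Y]. Then the algebra (L, α) is flexible: its associator satisfies (X,Y,X) = 0 for all X,Y ∈ L. -/
/-- If `α` is a bilinear multiplication on a Lie algebra `L` with
`α(X,Y) - α(Y,X) = ⁅X,Y⁆` and every `ad_X` a derivation of `(L,α)`, then `(L,α)` is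
flexible: `α(α(X,Y),X) - α(X,α(Y,X)) = 0`. -/
theorem ad_derivation_lieAdmissible_implies_flexible
    (k L : Type*) [Field k] (hchar : (2 : k) ≠ 0)
    [LieRing L] [LieAlgebra k L]
    (α : L →ₗ[k] L →ₗ[k] L)
    (hcomm : ∀ X Y : L, α X Y - α Y X = ⁅X, Y⁆)
    (hder : ∀ X Y Z : L, ⁅X, α Y Z⁆ = α ⁅X, Y⁆ Z + α Y ⁅X, Z⁆) :
    ∀ X Y : L, α (α X Y) X - α X (α Y X) = 0 := by
  intro X Y
  have h := hder X Y X
  rw [← hcomm X (α Y X), ← hcomm X Y, ← hcomm X X] at h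
  simp only [map_sub, LinearMap.sub_apply, sub_self, map_zero, sub_zero, add_zero] at h
  rw [sub_eq_zero]
  exact (sub_left_inj.mp h).symm
end
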